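/- For every n ≥ 4 there exist two distinct standard Young tableaux T₁ and T₂ with n entries such that the intersection of the multiset of 1-minors of T₁ with the multiset of 1-minors of T₂ has cardinality at least ⌊n/2⌋ + 1 (i.e., T₁ and T₂ have at least ⌊n/2⌋ + 1 common 1-minors, counted with multiplicity). Consequently, H₁(n) ≥ ⌊n/2⌋ + 2, where H₁(n) is the smallest m such that every standard Young tableau with n entries is uniquely determined by any submultiset of its multiset of 1-minors of cardinality at least m. -/

import Mathlib

/-- A standard Young tableau with `n` entries, encoded by its entry function
`entry : ℕ × ℕ → ℕ`: `entry (i, j) = 0` means there is no cell in row `i` and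
column `j` (both 0-indexed), and otherwise `entry (i, j)` is the label
(one of `1, …, n`) of the cell `(i, j)`.  Rows increase from left to right and
columns increase from top to bottom. -/
structure SYT (n : ℕ) where
  entry : ℕ × ℕ → ℕ
  /-- the set of cells is the Young diagram of a partition -/
  diagram : ∀ i j i' j', i' ≤ i → j' ≤ j → entry (i, j) ≠ 0 → entry (i', j') ≠ 0
  /-- every label is at most `n` -/
  le_n : ∀ c, entry c ≤ n
  /-- every label in `1, …, n` appears in some cell -/
  exists_cell : ∀ k, 1 ≤ k → k ≤ n → ∃ c, entry c = k
  /-- each label appears in at most one cell -/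
  inj : ∀ c c', entry c ≠ 0 → entry c = entry c' → c = c'
  /-- rows increase from left to right -/
  row_lt : ∀ i j, entry (i, j + 1) ≠ 0 → entry (i, j) < entry (i, j + 1)
  /-- columns increase from top to bottom -/
  col_lt : ∀ i j, entry (i + 1, j) ≠ 0 → entry (i, j) < entry (i + 1, j)

/-- The shape (set of cells) of an entry function. -/
def shapeOf (f : ℕ × ℕ → ℕ) : Set (ℕ × ℕ) := {c | f c ≠ 0}

/-- The shape of a standard Young tableau: the set of cells of its
underlying Young diagram. -/
def SYT.shape {n : ℕ} (T : SYT n) : Set (ℕ × ℕ) := shapeOf T.entry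

/-- `c` is an outer corner: a cell with no cell immediately to its right and
no cell immediately below it. -/
def IsOuterCorner (f : ℕ × ℕ → ℕ) (c : ℕ × ℕ) : Prop :=
  f c ≠ 0 ∧ f (c.1, c.2 + 1) = 0 ∧ f (c.1 + 1, c.2) = 0

/-- Jeu de taquin sliding: starting with a vacant cell `c`, repeatedly slide
into the vacant cell the smaller of the entries immediately to the right of and
immediately below it, until neither exists.  `fuel` bounds the number of steps;
any `fuel ≥ n` suffices for a tableau with `n` entries, and extra fuel does not
change the result once the process has terminated. -/
def jdtAux : ℕ → (ℕ × ℕ → ℕ) → ℕ × ℕ → (ℕ × ℕ → ℕ)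
  | 0, f, _ => f
  | fuel + 1, f, c =>
    let r := f (c.1, c.2 + 1)
    let b := f (c.1 + 1, c.2)
    if r = 0 ∧ b = 0 then f
    else if b = 0 ∨ (r ≠ 0 ∧ r < b) then
      jdtAux fuel (Function.update (Function.update f c r) (c.1, c.2 + 1) 0) (c.1, c.2 + 1)
    else
      jdtAux fuel (Function.update (Function.update f c b) (c.1 + 1, c.2) 0) (c.1 + 1, c.2)

open Classical

/-- Deletion of the entry `m` from an entry function: vacate the cell
containing `m`, perform the jeu de taquin sliding process, and then renumber
each entry `p > m` to `p - 1`. -/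
noncomputable def delRaw (fuel : ℕ) (f : ℕ × ℕ → ℕ) (m : ℕ) : ℕ × ℕ → ℕ :=
  if h : 0 < m ∧ ∃ c, f c = m then
    let g := jdtAux fuel (Function.update f (Classical.choose h.2) 0) (Classical.choose h.2)
    fun x => if m < g x then g x - 1 else g x
  else f

/-- The 1-minor `T - m` of a standard Young tableau `T` with `n` entries,
as an entry function (a standard Young tableau with `n - 1` entries). -/
noncomputable def SYT.del {n : ℕ} (T : SYT n) (m : ℕ) : ℕ × ℕ → ℕ :=
  delRaw n T.entry m

/-- The set of 1-minors `M¹(T) = {T - m : 1 ≤ m ≤ n}` of `T`. -/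
noncomputable def minors1 {n : ℕ} (T : SYT n) : Set (ℕ × ℕ → ℕ) :=
  {g | ∃ m, 1 ≤ m ∧ m ≤ n ∧ g = T.del m}

/-- The multiset of 1-minors `⟦T - m : 1 ≤ m ≤ n⟧` of `T`,
counted with multiplicities. -/
noncomputable def minors1M {n : ℕ} (T : SYT n) : Multiset (ℕ × ℕ → ℕ) :=
  (Finset.Icc 1 n).val.map T.del

lemma jdtAux_stop (fuel : ℕ) (f : ℕ × ℕ → ℕ) (c : ℕ × ℕ)
    (hr : f (c.1, c.2 + 1) = 0) (hb : f (c.1 + 1, c.2) = 0) : jdtAux fuel f c = f := by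
  cases fuel <;> simp [jdtAux, hr, hb]

lemma jdt_row_done (f : ℕ × ℕ → ℕ) (j : ℕ) (h0 : f (0, j) = 0) (hend : f (0, j + 1) = 0) :
    f = fun c => if c.1 = 0 ∧ j ≤ c.2 ∧ c.2 ≤ j then f (0, c.2 + 1) else f c := by
  funext c; obtain ⟨a, b⟩ := c
  by_cases h : a = 0 ∧ j ≤ b ∧ b ≤ j
  · obtain ⟨rfl, h2, h3⟩ := h
    have hb : b = j := by omega
    subst hb
    simp [h0, hend]
  · simp [h]

lemma jdt_row : ∀ (fuel : ℕ) (f : ℕ × ℕ → ℕ) (j J : ℕ), j ≤ J → J ≤ j + fuel →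
    f (0, j) = 0 →
    (∀ j', j ≤ j' → j' ≤ J → f (1, j') = 0 ∨ (f (0, j' + 1) ≠ 0 ∧ f (0, j' + 1) < f (1, j'))) →
    (∀ j', j < j' → j' ≤ J → f (0, j') ≠ 0) →
    f (0, J + 1) = 0 → f (1, J) = 0 →
    jdtAux fuel f (0, j) =
      fun c => if c.1 = 0 ∧ j ≤ c.2 ∧ c.2 ≤ J then f (0, c.2 + 1) else f c := by
  intro fuel
  induction fuel with
  | zero =>
    intro f j J hjJ hJ h0 _ _ hend hbJ
    obtain rfl : J = j := by omega
    rw [jdtAux]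
    exact jdt_row_done f _ h0 hend
  | succ fuel ih =>
    intro f j J hjJ hJ h0 hb hmid hend hbJ
    rcases eq_or_lt_of_le hjJ with rfl | hlt
    · rw [jdtAux_stop _ _ _ hend hbJ]
      exact jdt_row_done f _ h0 hend
    · have hr : f (0, j + 1) ≠ 0 := hmid (j + 1) (by omega) (by omega)
      set f₂ : ℕ × ℕ → ℕ :=
        Function.update (Function.update f (0, j) (f (0, j + 1))) (0, j + 1) 0 with hf₂
      have step : jdtAux (fuel + 1) f (0, j) = jdtAux fuel f₂ (0, j + 1) := by
        rw [jdtAux]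
        simp only
        rw [if_neg (fun h => hr h.1), if_pos]
        rcases hb j le_rfl (by omega) with h | h
        · exact Or.inl h
        · exact Or.inr ⟨hr, h.2⟩
      have hf₂v : ∀ a b : ℕ, ¬(a = 0 ∧ (b = j ∨ b = j + 1)) → f₂ (a, b) = f (a, b) := by
        intro a b h
        rw [hf₂, Function.update_apply, Function.update_apply, if_neg, if_neg] <;>
          · simp only [Prod.mk.injEq, not_and_or]; omega
      have h2v1 : f₂ (0, j + 1) = 0 := by rw [hf₂]; simp
      have h2v0 : f₂ (0, j) = f (0, j + 1) := by
        rw [hf₂, Function.update_apply, if_neg (by simp), Function.update_apply, if_pos rfl]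
      rw [step, ih f₂ (j + 1) J (by omega) (by omega) h2v1
        (fun j' h1 h2 => by
          rw [hf₂v 1 j' (by omega), hf₂v 0 (j' + 1) (by omega)]
          exact hb j' (by omega) h2)
        (fun j' h1 h2 => by rw [hf₂v 0 j' (by omega)]; exact hmid j' (by omega) h2)
        (by rw [hf₂v 0 (J + 1) (by omega)]; exact hend)
        (by rw [hf₂v 1 J (by omega)]; exact hbJ)]
      funext c; obtain ⟨a, b⟩ := c
      by_cases ha : a = 0
      · subst ha
        by_cases hb1 : j + 1 ≤ b ∧ b ≤ J
        · rw [if_pos ⟨rfl, hb1.1, hb1.2⟩, if_pos ⟨rfl, by omega, hb1.2⟩,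
            hf₂v 0 (b + 1) (by omega)]
        · rw [if_neg (by simpa using fun h => by omega)]
          by_cases hbj : b = j
          · subst hbj
            rw [if_pos ⟨rfl, le_rfl, by omega⟩, h2v0]
          · rw [if_neg (by simpa using fun h => by omega), hf₂v 0 b (by omega)]
      · rw [if_neg (by simp [ha]), if_neg (by simp [ha]), hf₂v a b (by omega)]

def hookF (n k : ℕ) : ℕ × ℕ → ℕ := fun c =>
  if c.1 = 0 ∧ c.2 + 2 ≤ n then (if c.2 + 1 < k then c.2 + 1 else c.2 + 2)
  else if c.1 = 1 ∧ c.2 = 0 then k else 0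

def rowF (n : ℕ) : ℕ × ℕ → ℕ := fun c => if c.1 = 0 ∧ c.2 + 1 ≤ n then c.2 + 1 else 0

lemma hookF_cell {n k : ℕ} (h2 : 2 ≤ k) {m : ℕ} (hm : 1 ≤ m) :
    ∀ c : ℕ × ℕ, hookF n k c = m →
      c = if m < k then ((0 : ℕ), m - 1) else if m = k then (1, 0) else (0, m - 2) := by
  rintro ⟨a, b⟩ h
  unfold hookF at h
  by_cases h1 : a = 0 ∧ b + 2 ≤ n
  · rw [if_pos h1] at h
    by_cases hlt : b + 1 < k
    · rw [if_pos hlt] at h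
      rw [if_pos (by omega)]
      simp only [Prod.mk.injEq]; omega
    · rw [if_neg hlt] at h
      rw [if_neg (by omega), if_neg (by omega)]
      simp only [Prod.mk.injEq]; omega
  · rw [if_neg h1] at h
    by_cases h3 : a = 1 ∧ b = 0
    · rw [if_pos h3] at h
      rw [if_neg (by omega), if_pos (by omega)]
      simp only [Prod.mk.injEq]; omega
    · rw [if_neg h3] at h; omega

def mkHook (n k : ℕ) (h2 : 2 ≤ k) (hkn : k ≤ n) : SYT n where
  entry := hookF n k
  diagram := by
    rintro i j i' j' hi hj h
    unfold hookF at h ⊢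
    split_ifs at h with h1 h3 <;> split_ifs with g1 g3 <;> omega
  le_n := by
    rintro ⟨a, b⟩
    unfold hookF
    split_ifs <;> omega
  exists_cell := by
    intro p hp1 hpn
    by_cases hpk : p = k
    · exact ⟨(1, 0), by unfold hookF; rw [if_neg (by omega), if_pos ⟨rfl, rfl⟩]; omega⟩
    · by_cases hlt : p < k
      · refine ⟨(0, p - 1), ?_⟩
        unfold hookF
        rw [if_pos ⟨rfl, by omega⟩, if_pos (by omega)]
        omega
      · refine ⟨(0, p - 2), ?_⟩
        unfold hookF
        rw [if_pos ⟨rfl, by omega⟩, if_neg (by omega)]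
        omega
  inj := by
    intro c c' hc hcc
    have h1 : 1 ≤ hookF n k c := Nat.one_le_iff_ne_zero.mpr hc
    rw [hookF_cell h2 h1 c rfl, hookF_cell h2 h1 c' hcc.symm]
  row_lt := by
    intro i j h
    unfold hookF at h ⊢
    split_ifs at h with h1 h3 <;> split_ifs <;> simp only [and_false, false_and] at * <;> omega
  col_lt := by
    intro i j h
    unfold hookF at h ⊢
    split_ifs at h with h1 h3 <;> split_ifs <;> simp only [and_false, false_and] at * <;> omega

lemma del_corner (n k : ℕ) (h2 : 2 ≤ k) (hkn : k ≤ n) :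
    delRaw n (hookF n k) k = rowF (n - 1) := by
  have hex : 0 < k ∧ ∃ c, hookF n k c = k :=
    ⟨by omega, ⟨(1, 0), by unfold hookF; rw [if_neg (by omega), if_pos ⟨rfl, rfl⟩]⟩⟩
  unfold delRaw
  rw [dif_pos hex]
  have hch : Classical.choose hex.2 = ((1 : ℕ), (0 : ℕ)) := by
    have h := hookF_cell h2 (show 1 ≤ k by omega) _ (Classical.choose_spec hex.2)
    rw [h, if_neg (lt_irrefl k), if_pos rfl]
  simp only [hch]
  rw [jdtAux_stop _ _ _ (by simp [Function.update_apply, hookF]) (by simp [Function.update_apply, hookF])]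
  funext c; obtain ⟨a, b⟩ := c
  simp only [Function.update_apply, hookF, rowF, Prod.mk.injEq]
  split_ifs <;> omega

lemma del_gt (n k m : ℕ) (h2 : 2 ≤ k) (hkm : k < m) (hmn : m ≤ n) (hn : 4 ≤ n) :
    delRaw n (hookF n k) m = hookF (n - 1) k := by
  have hex : 0 < m ∧ ∃ c, hookF n k c = m :=
    ⟨by omega, ⟨(0, m - 2), by
      unfold hookF; rw [if_pos ⟨rfl, by omega⟩, if_neg (by omega)]; omega⟩⟩
  unfold delRaw
  rw [dif_pos hex]
  have hch : Classical.choose hex.2 = ((0 : ℕ), m - 2) := by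
    have h := hookF_cell h2 (show 1 ≤ m by omega) _ (Classical.choose_spec hex.2)
    rw [h, if_neg (by omega), if_neg (by omega)]
  simp only [hch]
  rw [jdt_row n (Function.update (hookF n k) (0, m - 2) 0) (m - 2) (n - 2)
    (by omega) (by omega)
    (by simp)
    (fun j' h1 h2 => by
      left
      simp [Function.update_apply, hookF, Prod.ext_iff] <;> (try split_ifs) <;> (try simp) <;> omega)
    (fun j' h1 h2 => by
      simp [Function.update_apply, hookF, Prod.ext_iff] <;> (try split_ifs) <;> (try simp) <;> omega)
    (by simp [Function.update_apply, hookF, Prod.ext_iff] <;> (try split_ifs) <;> (try simp) <;> omega)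
    (by simp [Function.update_apply, hookF, Prod.ext_iff] <;> (try split_ifs) <;> (try simp) <;> omega)]
  funext c; obtain ⟨a, b⟩ := c
  simp [Function.update_apply, hookF, Prod.ext_iff] <;> (try split_ifs) <;> (try simp) <;> omega

lemma jdtAux_step_right (fuel : ℕ) (f : ℕ × ℕ → ℕ) (a b : ℕ)
    (h : f (a + 1, b) = 0 ∨ (f (a, b + 1) ≠ 0 ∧ f (a, b + 1) < f (a + 1, b)))
    (hr : f (a, b + 1) ≠ 0) :
    jdtAux (fuel + 1) f (a, b) =
      jdtAux fuel (Function.update (Function.update f (a, b) (f (a, b + 1))) (a, b + 1) 0)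
        (a, b + 1) := by
  rw [jdtAux]
  simp only
  rw [if_neg (fun hc => hr hc.1), if_pos h]

set_option maxHeartbeats 1600000 in
lemma del_lt (n K m : ℕ) (h3 : 3 ≤ K) (hKn : K ≤ n) (hm1 : 1 ≤ m) (hmK : m < K)
    (hn : 4 ≤ n) :
    delRaw n (hookF n K) m = hookF (n - 1) (K - 1) := by
  have hex : 0 < m ∧ ∃ c, hookF n K c = m :=
    ⟨hm1, ⟨(0, m - 1), by
      unfold hookF; rw [if_pos ⟨rfl, by omega⟩, if_pos (by omega)]; omega⟩⟩
  unfold delRaw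
  rw [dif_pos hex]
  have hch : Classical.choose hex.2 = ((0 : ℕ), m - 1) := by
    have h := hookF_cell (show 2 ≤ K by omega) hm1 _ (Classical.choose_spec hex.2)
    rw [h, if_pos hmK]
  simp only [hch]
  by_cases hm2 : 2 ≤ m
  · rw [jdt_row n (Function.update (hookF n K) (0, m - 1) 0) (m - 1) (n - 2)
      (by omega) (by omega) (by simp)
      (fun j' h1 h2 => by
        left
        simp [Function.update_apply, hookF, Prod.ext_iff] <;> (try split_ifs) <;>
          (try simp) <;> omega)
      (fun j' h1 h2 => by
        simp [Function.update_apply, hookF, Prod.ext_iff] <;> (try split_ifs) <;>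
          (try simp) <;> omega)
      (by simp [Function.update_apply, hookF, Prod.ext_iff] <;> (try split_ifs) <;>
          (try simp) <;> omega)
      (by simp [Function.update_apply, hookF, Prod.ext_iff] <;> (try split_ifs) <;>
          (try simp) <;> omega)]
    funext c; obtain ⟨a, b⟩ := c
    simp [Function.update_apply, hookF, Prod.ext_iff] <;> (try split_ifs) <;>
      (try simp) <;> omega
  · obtain rfl : m = 1 := by omega
    obtain ⟨n', rfl⟩ : ∃ n', n = n' + 1 := ⟨n - 1, by omega⟩
    rw [show ((0 : ℕ), 1 - 1) = ((0 : ℕ), (0 : ℕ)) by norm_num]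
    rw [jdtAux_step_right n' (Function.update (hookF (n' + 1) K) (0, 0) 0) 0 0
      (by right
          constructor <;>
            · simp [Function.update_apply, hookF, Prod.ext_iff] <;> (try split_ifs) <;>
                (try simp) <;> omega)
      (by simp [Function.update_apply, hookF, Prod.ext_iff] <;> (try split_ifs) <;>
          (try simp) <;> omega)]
    rw [jdt_row n' _ (0 + 1) (n' + 1 - 2)
      (by omega) (by omega) (by simp)
      (fun j' h1 h2 => by
        left
        simp [Function.update_apply, hookF, Prod.ext_iff] <;> (try split_ifs) <;>
          (try simp) <;> omega)
      (fun j' h1 h2 => by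
        simp [Function.update_apply, hookF, Prod.ext_iff] <;> (try split_ifs) <;>
          (try simp) <;> omega)
      (by simp [Function.update_apply, hookF, Prod.ext_iff] <;> (try split_ifs) <;>
          (try simp) <;> omega)
      (by simp [Function.update_apply, hookF, Prod.ext_iff] <;> (try split_ifs) <;>
          (try simp) <;> omega)]
    funext c; obtain ⟨a, b⟩ := c
    simp [Function.update_apply, hookF, Prod.ext_iff] <;> (try split_ifs) <;>
      (try simp) <;> omega

/-- For every `n ≥ 4` there are two distinct standard Young tableaux with `n`
entries having at least `⌊n/2⌋ + 1` common 1-minors (counted with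
multiplicity).  Consequently `H₁(n) ≥ ⌊n/2⌋ + 2`, where `H₁(n)` is the
smallest `m` such that every standard Young tableau with `n` entries is
uniquely determined by any submultiset of its multiset of 1-minors of
cardinality at least `m`. -/
theorem syt_common_one_minors_lower_bound
    (n : ℕ) (hn : 4 ≤ n) :
    (∃ T₁ T₂ : SYT n, T₁ ≠ T₂ ∧
      n / 2 + 1 ≤ (minors1M T₁ ∩ minors1M T₂).card) ∧
    n / 2 + 2 ≤
      sInf {m : ℕ | ∀ (T : SYT n) (X : Multiset (ℕ × ℕ → ℕ)),
        X ≤ minors1M T → m ≤ X.card → ∀ S : SYT n, X ≤ minors1M S → S = T} := by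
  set k := n / 2 with hk
  have hk2 : 2 ≤ k := by omega
  have hkn : k + 1 ≤ n := by omega
  set T₁ : SYT n := mkHook n k hk2 (by omega) with hT₁
  set T₂ : SYT n := mkHook n (k + 1) (by omega) (by omega) with hT₂
  set A : ℕ × ℕ → ℕ := hookF (n - 1) k with hA
  set B : ℕ × ℕ → ℕ := rowF (n - 1) with hB
  have hAB : A ≠ B := by
    intro h
    have h0 := congrFun h (1, 0)
    simp [hA, hB, hookF, rowF] at h0
    omega
  have hT12 : T₁ ≠ T₂ := by
    intro h
    have h0 := congrFun (congrArg SYT.entry h) (1, 0)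
    simp [hT₁, hT₂, mkHook, hookF] at h0
  -- counts for T₁
  have hdel1 : ∀ m ∈ (Finset.Icc (k + 1) n).val, T₁.del m = A := by
    intro m hm
    rw [← Finset.mem_def, Finset.mem_Icc] at hm
    exact del_gt n k m hk2 (by omega) (by omega) hn
  have hcnt1A : n - k ≤ (minors1M T₁).count A := by
    have hsub : (Finset.Icc (k + 1) n).val ≤ (Finset.Icc 1 n).val :=
      Finset.val_le_iff.mpr (Finset.Icc_subset_Icc (by omega) le_rfl)
    have hmapeq : (Finset.Icc (k + 1) n).val.map T₁.del =
        Multiset.replicate (n - k) A := by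
      rw [Multiset.map_congr rfl hdel1]
      rw [Multiset.map_const']
      congr 1
      have : ((Finset.Icc (k + 1) n).val).card = (Finset.Icc (k + 1) n).card := rfl
      rw [this, Nat.card_Icc]
      omega
    have := Multiset.count_le_of_le A (Multiset.map_le_map (f := T₁.del) hsub)
    rw [hmapeq, Multiset.count_replicate_self] at this
    exact this
  have hcnt1B : 1 ≤ (minors1M T₁).count B := by
    rw [Multiset.one_le_count_iff_mem]
    refine Multiset.mem_map.mpr ⟨k, ?_, ?_⟩
    · exact Finset.mem_val.mpr (Finset.mem_Icc.mpr ⟨by omega, by omega⟩)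
    · exact del_corner n k hk2 (by omega)
  have hdel2 : ∀ m ∈ (Finset.Icc 1 k).val, T₂.del m = A := by
    intro m hm
    rw [← Finset.mem_def, Finset.mem_Icc] at hm
    have h := del_lt n (k + 1) m (by omega) (by omega) (by omega) (by omega) hn
    simp at h; exact h
  have hcnt2A : k ≤ (minors1M T₂).count A := by
    have hsub : (Finset.Icc 1 k).val ≤ (Finset.Icc 1 n).val :=
      Finset.val_le_iff.mpr (Finset.Icc_subset_Icc le_rfl (by omega))
    have hmapeq : (Finset.Icc 1 k).val.map T₂.del = Multiset.replicate k A := by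
      rw [Multiset.map_congr rfl hdel2]
      rw [Multiset.map_const']
      congr 1
      have : ((Finset.Icc 1 k).val).card = (Finset.Icc 1 k).card := rfl
      rw [this, Nat.card_Icc]
      omega
    have := Multiset.count_le_of_le A (Multiset.map_le_map (f := T₂.del) hsub)
    rw [hmapeq, Multiset.count_replicate_self] at this
    exact this
  have hcnt2B : 1 ≤ (minors1M T₂).count B := by
    rw [Multiset.one_le_count_iff_mem]
    refine Multiset.mem_map.mpr ⟨k + 1, ?_, ?_⟩
    · exact Finset.mem_val.mpr (Finset.mem_Icc.mpr ⟨by omega, by omega⟩)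
    · exact del_corner n (k + 1) (by omega) (by omega)
  set u : Multiset (ℕ × ℕ → ℕ) :=
    Multiset.replicate (n / 2) A + Multiset.replicate 1 B with hu
  have hucard : u.card = n / 2 + 1 := by
    rw [hu, Multiset.card_add, Multiset.card_replicate, Multiset.card_replicate]
  have hule : ∀ T : SYT n, n / 2 ≤ (minors1M T).count A → 1 ≤ (minors1M T).count B →
      u ≤ minors1M T := by
    intro T hA' hB'
    rw [Multiset.le_iff_count]
    intro a
    rw [hu, Multiset.count_add, Multiset.count_replicate, Multiset.count_replicate]
    by_cases haA : a = A
    · subst haA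
      rw [if_pos rfl, if_neg (fun h => hAB h.symm)]
      omega
    · rw [if_neg (fun h => haA h.symm)]
      by_cases haB : a = B
      · subst haB
        rw [if_pos rfl]
        omega
      · rw [if_neg (fun h => haB h.symm)]
        simp
  have hu1 : u ≤ minors1M T₁ := hule T₁ (by omega) hcnt1B
  have hu2 : u ≤ minors1M T₂ := hule T₂ (by omega) hcnt2B
  have hinter : n / 2 + 1 ≤ (minors1M T₁ ∩ minors1M T₂).card := by
    have := Multiset.card_le_card (Multiset.le_inter hu1 hu2)
    omega
  refine ⟨⟨T₁, T₂, hT12, hinter⟩, ?_⟩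
  have hmem : (n + 1) ∈ {m : ℕ | ∀ (T : SYT n) (X : Multiset (ℕ × ℕ → ℕ)),
      X ≤ minors1M T → m ≤ X.card → ∀ S : SYT n, X ≤ minors1M S → S = T} := by
    intro T X hX hcard S hS
    exfalso
    have h1 := Multiset.card_le_card hX
    have h2 : (minors1M T).card = n := by
      rw [minors1M, Multiset.card_map]
      have : ((Finset.Icc 1 n).val).card = (Finset.Icc 1 n).card := rfl
      rw [this, Nat.card_Icc]
      omega
    omega
  have hne : {m : ℕ | ∀ (T : SYT n) (X : Multiset (ℕ × ℕ → ℕ)),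
      X ≤ minors1M T → m ≤ X.card → ∀ S : SYT n, X ≤ minors1M S → S = T}.Nonempty :=
    ⟨n + 1, hmem⟩
  have hmem2 := Nat.sInf_mem hne
  by_contra hcon
  push_neg at hcon
  have := hmem2 T₁ (minors1M T₁ ∩ minors1M T₂) Multiset.inter_le_left
    (by omega) T₂ Multiset.inter_le_right
  exact hT12 this.symm
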